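/- arXiv:1011.0178 — 3 statements merged into one kernel-verified Lean document; each statement's English description precedes it below -/
import Mathlib

section
/- The matrix exponential maps 𝕋_n(ℂ) onto 𝕋_n^*(ℂ): exp(𝕋_n(ℂ)) = 𝕋_n^*(ℂ). -/
open NormedSpace

/-- `A` is lower triangular with all diagonal entries equal (the set `𝕋_n(K)`). -/
def LowerTriConstDiag {K : Type*} [Semiring K] {n : ℕ}
    (A : Matrix (Fin n) (Fin n) K) : Prop :=
  (∀ i j : Fin n, i < j → A i j = 0) ∧ ∀ i j : Fin n, A i i = A j j

/-!
`𝕋_n(ℂ)` is a topologically closed subalgebra of the matrices, so it contains `exp A` for each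
of its elements `A`; and `exp A` is invertible and lower triangular, so its diagonal entries are
nonzero.

Conversely, `B ∈ 𝕋_n^*(ℂ)` is `μ (1 + N)` with `μ ≠ 0` and `N` strictly lower triangular,
so `N ^ n = 0`. If `L` is the Taylor polynomial of degree `n` of `log (1 + X)`, then
`exp (log μ + L(N)) = B`: the truncated exponential `E` of `L` satisfies `E(0) = 1` and
`(1 + X) E' ≡ E` modulo `X ^ n`, an initial value problem whose only solution modulo `X ^ n`
is `1 + X`.
-/

open Matrix Polynomial Finset
open scoped Nat

namespace Polynomial

theorem X_pow_dvd_of_X_pow_dvd_one_add_X_mul_derivative_sub {R : Type*} [CommRing R]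
    [NoZeroDivisors R] [CharZero R] {F : R[X]} {M : ℕ} (h0 : F.coeff 0 = 0)
    (h : X ^ M ∣ (1 + X) * derivative F - F) : X ^ M ∣ F := by
  rw [X_pow_dvd_iff] at h ⊢
  intro d hd
  induction d with
  | zero => exact h0
  | succ d ih =>
    have hcoeff_X_mul : (X * derivative F).coeff d = d * F.coeff d := by
      cases d with
      | zero => simp
      | succ e => rw [coeff_X_mul, coeff_derivative]; push_cast; ring
    have hd' := h d (by omega)
    rw [coeff_sub, add_mul, one_mul, coeff_add, hcoeff_X_mul, coeff_derivative,
      ih (by omega)] at hd'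
    have : ((d : R) + 1) * F.coeff (d + 1) = 0 := by linear_combination hd'
    exact (mul_eq_zero.mp this).resolve_left (Nat.cast_add_one_ne_zero d)

theorem aeval_eq_zero_of_X_pow_dvd {R A : Type*} [CommSemiring R] [Semiring A] [Algebra R A]
    {x : A} {M : ℕ} (hx : x ^ M = 0) {p : R[X]} (hp : X ^ M ∣ p) : aeval x p = 0 := by
  obtain ⟨q, rfl⟩ := hp
  simp [hx]

variable (K : Type*) [Field K]

noncomputable def logOneAddTrunc (M : ℕ) : K[X] :=
  ∑ k ∈ range M, C ((-1 : K) ^ k / (k + 1)) * X ^ (k + 1)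

variable {K}

noncomputable def expTrunc (M : ℕ) (p : K[X]) : K[X] :=
  ∑ i ∈ range M, C (i ! : K)⁻¹ * p ^ i

theorem X_dvd_logOneAddTrunc (M : ℕ) : X ∣ logOneAddTrunc K M :=
  dvd_sum fun k _ => (dvd_pow_self X k.succ_ne_zero).mul_left _

theorem one_add_X_mul_derivative_logOneAddTrunc [CharZero K] (M : ℕ) :
    (1 + X) * derivative (logOneAddTrunc K M) = 1 - (-X : K[X]) ^ M := by
  have hderiv : derivative (logOneAddTrunc K M) = ∑ k ∈ range M, (-X) ^ k := by
    rw [logOneAddTrunc, derivative_sum]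
    refine sum_congr rfl fun k _ => ?_
    have hcoeff : (-1 : K) ^ k / (k + 1) * ((k + 1 : ℕ) : K) = (-1) ^ k := by
      have : ((k : K) + 1) ≠ 0 := Nat.cast_add_one_ne_zero k
      push_cast
      field_simp
    rw [derivative_C_mul_X_pow, hcoeff, Nat.add_sub_cancel, neg_pow (X : K[X]), C_pow, C_neg,
      C_1]
  rw [hderiv]
  linear_combination (-1 : K[X]) * geom_sum_mul (-X : K[X]) M

theorem derivative_expTrunc_succ [CharZero K] (M : ℕ) (p : K[X]) :
    derivative (expTrunc (M + 1) p) = derivative p * expTrunc M p := by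
  rw [expTrunc, expTrunc, derivative_sum, sum_range_succ', mul_sum]
  simp only [pow_zero, mul_one, derivative_C, add_zero]
  refine sum_congr rfl fun i _ => ?_
  rw [derivative_C_mul, derivative_pow, Nat.add_sub_cancel]
  have hfac : ((i + 1)! : K)⁻¹ * ((i + 1 : ℕ) : K) = (i ! : K)⁻¹ := by
    rw [Nat.factorial_succ, Nat.cast_mul, mul_inv, mul_comm, ← mul_assoc,
      mul_inv_cancel₀ (Nat.cast_ne_zero.mpr i.succ_ne_zero), one_mul]
  calc C ((i + 1)! : K)⁻¹ * (C ((i + 1 : ℕ) : K) * p ^ i * derivative p)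
      = C (((i + 1)! : K)⁻¹ * ((i + 1 : ℕ) : K)) * p ^ i * derivative p := by
        rw [C_mul]; ring
    _ = derivative p * (C (i ! : K)⁻¹ * p ^ i) := by rw [hfac]; ring

theorem X_pow_dvd_expTrunc_logOneAddTrunc_sub [CharZero K] (M : ℕ) :
    X ^ M ∣ expTrunc (M + 1) (logOneAddTrunc K M) - (1 + X) := by
  set L := logOneAddTrunc K M
  have hL0 : L.eval 0 = 0 := by
    obtain ⟨L₁, hL₁⟩ := X_dvd_logOneAddTrunc (K := K) M
    simp [L, hL₁]
  have hsplit : expTrunc (M + 1) L = expTrunc M L + C (M ! : K)⁻¹ * L ^ M :=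
    sum_range_succ _ _
  apply X_pow_dvd_of_X_pow_dvd_one_add_X_mul_derivative_sub
  · simp [expTrunc, sum_range_succ', coeff_zero_eq_eval_zero, eval_finsetSum, hL0]
  · have hode : (1 + X) * derivative (expTrunc (M + 1) L - (1 + X)) -
        (expTrunc (M + 1) L - (1 + X)) = -((-X) ^ M * expTrunc M L) - C (M ! : K)⁻¹ * L ^ M := by
      rw [derivative_sub, derivative_expTrunc_succ]
      simp only [derivative_add, derivative_one, derivative_X, zero_add]
      linear_combination expTrunc M L * one_add_X_mul_derivative_logOneAddTrunc (K := K) M - hsplit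
    rw [hode]
    refine dvd_sub (dvd_neg.mpr (dvd_mul_of_dvd_left ?_ _)) (dvd_mul_of_dvd_right ?_ _)
    · rw [neg_pow]
      exact dvd_mul_left _ _
    · exact pow_dvd_pow_of_dvd (X_dvd_logOneAddTrunc M) M

theorem aeval_expTrunc {A : Type*} [Ring A] [Algebra K A] (x : A) (M : ℕ) (p : K[X]) :
    aeval x (expTrunc M p) = ∑ i ∈ range M, (i ! : K)⁻¹ • aeval x p ^ i := by
  simp [expTrunc, Algebra.smul_def]

end Polynomial

namespace NormedSpace

variable {K A : Type*} [Field K] [CharZero K] [Ring A] [Algebra K A] [TopologicalSpace A]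
  [IsTopologicalRing A]

theorem exp_eq_sum_of_pow_eq_zero {x : A} {k : ℕ} (h : x ^ k = 0) :
    exp x = ∑ i ∈ range k, (i ! : K)⁻¹ • x ^ i := by
  rw [exp_eq_tsum K]
  exact tsum_eq_sum fun i hi => by
    rw [pow_eq_zero_of_le (by simpa using hi) h, smul_zero]

theorem exp_aeval_logOneAddTrunc {x : A} {M : ℕ} (hx : x ^ M = 0) :
    exp (aeval x (logOneAddTrunc K M)) = 1 + x := by
  have hpow : aeval x (logOneAddTrunc K M) ^ (M + 1) = 0 := by
    rw [← map_pow]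
    exact aeval_eq_zero_of_X_pow_dvd hx
      ((pow_dvd_pow_of_dvd (X_dvd_logOneAddTrunc M) M).trans (pow_dvd_pow _ M.le_succ))
  have htrunc := aeval_eq_zero_of_X_pow_dvd hx (X_pow_dvd_expTrunc_logOneAddTrunc_sub (K := K) M)
  rw [map_sub, sub_eq_zero, aeval_expTrunc] at htrunc
  rw [exp_eq_sum_of_pow_eq_zero (K := K) hpow, htrunc]
  simp

end NormedSpace

namespace Matrix

variable {ι R : Type*} [Fintype ι] [LinearOrder ι]

theorem IsLowerTriangular.mul_apply_self [NonUnitalNonAssocSemiring R] {A B : Matrix ι ι R}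
    (hA : A.IsLowerTriangular) (hB : B.IsLowerTriangular) (i : ι) :
    (A * B) i i = A i i * B i i := by
  rw [mul_apply, Finset.sum_eq_single i]
  · intro k _ hki
    rcases hki.lt_or_gt with hk | hk
    · rw [hB hk, mul_zero]
    · rw [hA hk, zero_mul]
  · simp

theorem IsLowerTriangular.apply_self_ne_zero_of_isUnit [CommRing R] [Nontrivial R]
    [DecidableEq ι] {A : Matrix ι ι R} (hA : A.IsLowerTriangular) (hunit : IsUnit A) (i : ι) :
    A i i ≠ 0 := by
  have hdet : ∏ j, A j j ≠ 0 := by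
    rw [← det_of_isLowerTriangular A hA]
    exact ((isUnit_iff_isUnit_det A).mp hunit).ne_zero
  exact fun h => hdet (Finset.prod_eq_zero (Finset.mem_univ i) h)

theorem IsLowerTriangular.pow_card_eq_zero [CommRing R] [DecidableEq ι] {A : Matrix ι ι R}
    (hA : A.IsLowerTriangular) (hdiag : ∀ i, A i i = 0) : A ^ Fintype.card ι = 0 := by
  have hchar : A.charpoly = X ^ Fintype.card ι := by
    have hAt : Aᵀ.IsUpperTriangular := fun _ _ h => hA h
    rw [← charpoly_transpose, charpoly_of_isUpperTriangular _ hAt]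
    simp [hdiag]
  simpa [hchar] using aeval_self_charpoly A

end Matrix

theorem Matrix.exp_smul_one {m : Type*} [Fintype m] [DecidableEq m] (c : ℂ) :
    exp (c • (1 : Matrix m m ℂ)) = Complex.exp c • 1 := by
  rw [smul_one_eq_diagonal, exp_diagonal, smul_one_eq_diagonal]
  congr
  funext i
  rw [Pi.coe_exp, ← Complex.exp_eq_exp_ℂ]

section LowerTriConstDiag

variable {R : Type*} {n : ℕ}

theorem LowerTriConstDiag.isLowerTriangular [Semiring R] {A : Matrix (Fin n) (Fin n) R}
    (hA : LowerTriConstDiag A) : A.IsLowerTriangular :=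
  fun i j h => hA.1 i j h

theorem LowerTriConstDiag.exists_ne_zero_forall_apply_self_eq [Semiring R] [Nontrivial R]
    {A : Matrix (Fin n) (Fin n) R} (hA : LowerTriConstDiag A) (hne : ∀ i, A i i ≠ 0) :
    ∃ μ ≠ 0, ∀ i, A i i = μ := by
  cases n with
  | zero => exact ⟨1, one_ne_zero, fun i => i.elim0⟩
  | succ n => exact ⟨A 0 0, hne 0, fun i => hA.2 i 0⟩

theorem isClosed_setOf_lowerTriConstDiag [Semiring R] [TopologicalSpace R] [T2Space R] :
    IsClosed {A : Matrix (Fin n) (Fin n) R | LowerTriConstDiag A} := by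
  have hdiag : IsClosed {A : Matrix (Fin n) (Fin n) R | ∀ i j, A i i = A j j} := by
    simp only [Set.ofPred_forall]
    exact isClosed_iInter fun i => isClosed_iInter fun j =>
      isClosed_eq (continuous_id.matrix_elem i i) (continuous_id.matrix_elem j j)
  exact (isClosed_setOfPred_blockTriangular (b := OrderDual.toDual)).inter hdiag

variable (R n) in
def lowerTriConstDiagSubalgebra [CommSemiring R] : Subalgebra R (Matrix (Fin n) (Fin n) R) where
  carrier := {A | LowerTriConstDiag A}
  mul_mem' {A B} hA hB := by
    refine ⟨fun i j h => hA.isLowerTriangular.mul hB.isLowerTriangular h, fun i j => ?_⟩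
    simp only [hA.isLowerTriangular.mul_apply_self hB.isLowerTriangular, hA.2 i j, hB.2 i j]
  add_mem' hA hB := ⟨fun i j h => by simp [hA.1 i j h, hB.1 i j h], fun i j => by
    simp [hA.2 i j, hB.2 i j]⟩
  algebraMap_mem' r := ⟨fun i j h => by simp [algebraMap_matrix_apply, h.ne],
    fun i j => by simp [algebraMap_matrix_apply]⟩

end LowerTriConstDiag

/-- Appendix (ii): `exp(𝕋_n(ℂ)) = 𝕋_n^*(ℂ)`, the lower triangular matrices with constant
nonzero diagonal. -/
theorem exp_image_lowerTri_complex (n : ℕ) :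
    exp '' {A : Matrix (Fin n) (Fin n) ℂ | LowerTriConstDiag A} =
      {A : Matrix (Fin n) (Fin n) ℂ | LowerTriConstDiag A ∧ ∀ i, A i i ≠ 0} := by
  let 𝕋 := lowerTriConstDiagSubalgebra ℂ n
  ext B
  constructor
  · rintro ⟨A, hA, rfl⟩
    have hexp : exp A ∈ 𝕋 := exp_mem isClosed_setOf_lowerTriConstDiag hA
    exact ⟨hexp, hexp.isLowerTriangular.apply_self_ne_zero_of_isUnit (isUnit_exp A)⟩
  · rintro ⟨hB, hne⟩
    obtain ⟨μ, hμ, hBμ⟩ := hB.exists_ne_zero_forall_apply_self_eq hne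
    set N := μ⁻¹ • B - 1
    have hN : N ∈ 𝕋 := sub_mem (Subalgebra.smul_mem 𝕋 hB _) (one_mem 𝕋)
    have hNpow : N ^ n = 0 := by
      simpa using hN.isLowerTriangular.pow_card_eq_zero fun i => by simp [N, hBμ, hμ]
    set L := aeval N (logOneAddTrunc ℂ n)
    have hL : L ∈ 𝕋 :=
      Algebra.adjoin_le (Set.singleton_subset_iff.mpr hN) (aeval_mem_adjoin_singleton ℂ N)
    refine ⟨Complex.log μ • 1 + L,
      add_mem (Subalgebra.smul_mem 𝕋 (one_mem 𝕋) _) hL, ?_⟩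
    rw [Matrix.exp_add_of_commute _ _ ((Commute.one_left L).smul_left _), exp_smul_one,
      exp_aeval_logOneAddTrunc hNpow, Complex.exp_log hμ, smul_one_mul, add_sub_cancel,
      smul_smul, mul_inv_cancel₀ hμ, one_smul]
end

section
/- If B is a real n×n matrix having a unique eigenvalue and e^B lies in 𝕋_n^+(ℝ) (lower triangular with constant positive diagonal), then B itself lies in 𝕋_n(ℝ) (lower triangular with constant diagonal). -/
/-!
Write `B = μ + N`. By Cayley–Hamilton `N` is nilpotent, and `exp N = e^{-μ} exp B` is lower
triangular, hence so is every `exp (k • N) = (exp N) ^ k`. Since the exponential series of a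
nilpotent matrix terminates, each entry of `exp (k • N)` above the diagonal is a polynomial in `k`
vanishing at all natural numbers; its linear coefficient is the corresponding entry of `N`, so `N`
and `B` are lower triangular. A lower triangular `B` has characteristic polynomial
`∏ i, (X - B i i)`, so every diagonal entry of `B` is a root of `(X - μ) ^ n`.
-/

open Polynomial NormedSpace

open Finset Matrix
open scoped Nat

theorem eq_zero_of_forall_sum_mul_natCast_pow_eq_zero {R : Type*} [CommRing R]
    [IsDomain R] [CharZero R] {d : ℕ} {c : ℕ → R}
    (h : ∀ k : ℕ, ∑ l ∈ range d, c l * (k : R) ^ l = 0) {l : ℕ} (hl : l < d) : c l = 0 := by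
  set p : R[X] := ∑ l ∈ range d, C (c l) * X ^ l
  have hp : p = 0 := by
    refine eq_zero_of_infinite_isRoot p
      (Set.infinite_of_injective_forall_mem Nat.cast_injective fun k => ?_)
    simpa [p, eval_finsetSum] using h k
  simpa [p, finsetSum_coeff, coeff_C_mul_X_pow, hl] using congrArg (coeff · l) hp

theorem NormedSpace.exp_eq_sum_range_of_pow_eq_zero (𝕂 : Type*) {𝔸 : Type*} [Field 𝕂] [CharZero 𝕂]
    [Ring 𝔸] [Algebra 𝕂 𝔸] [TopologicalSpace 𝔸] [IsTopologicalRing 𝔸] [T2Space 𝔸]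
    {x : 𝔸} {d : ℕ} (hx : x ^ d = 0) : exp x = ∑ l ∈ range d, (l !⁻¹ : 𝕂) • x ^ l := by
  rw [exp_eq_tsum 𝕂]
  refine tsum_eq_sum fun l hl => ?_
  rw [pow_eq_zero_of_le (by simpa using hl) hx, smul_zero]

namespace Matrix

variable {m R : Type*} [Fintype m] [DecidableEq m]

theorem pow_sub_algebraMap_eq_zero_of_charpoly_eq [CommRing R] {M : Matrix m m R} {μ : R} {d : ℕ}
    (h : M.charpoly = (X - C μ) ^ d) : (M - algebraMap R _ μ) ^ d = 0 := by
  simpa [h] using M.aeval_self_charpoly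

variable [LinearOrder m]

theorem IsLowerTriangular.charpoly [CommRing R] {M : Matrix m m R} (h : M.IsLowerTriangular) :
    M.charpoly = ∏ i, (X - C (M i i)) := by
  simp [Matrix.charpoly, det_of_isLowerTriangular _ h.charmatrix]

theorem IsLowerTriangular.diag_eq_of_charpoly_eq [CommRing R] [IsReduced R] {M : Matrix m m R}
    (hM : M.IsLowerTriangular) {μ : R} {d : ℕ} (h : M.charpoly = (X - C μ) ^ d) (i : m) :
    M i i = μ := by
  have hroot : (M.charpoly).eval (M i i) = 0 := by
    rw [hM.charpoly, eval_prod]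
    exact prod_eq_zero (mem_univ i) (by simp)
  rw [h] at hroot
  exact sub_eq_zero.mp (eq_zero_of_pow_eq_zero (by simpa using hroot))

theorem IsLowerTriangular.exp_sub_algebraMap {𝕂 : Type*} [RCLike 𝕂] {A : Matrix m m 𝕂}
    (hA : (exp A).IsLowerTriangular) (μ : 𝕂) : (exp (A - algebraMap 𝕂 _ μ)).IsLowerTriangular := by
  rw [sub_eq_neg_add, ← map_neg, exp_add_of_commute _ _ (Algebra.commute_algebraMap_left _ _)]
  exact (blockTriangular_algebraMap _).exp.mul hA

theorem IsLowerTriangular.of_exp_of_isNilpotent {𝕂 : Type*} [RCLike 𝕂] {N : Matrix m m 𝕂}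
    (hN : IsNilpotent N) (h : (exp N).IsLowerTriangular) : N.IsLowerTriangular := by
  intro i j hij
  obtain ⟨d, hd⟩ := hN
  have hsum : ∀ k : ℕ, ∑ l ∈ range (d + 2), ((l !⁻¹ : 𝕂) * (N ^ l) i j) * (k : 𝕂) ^ l = 0 := by
    intro k
    have hk : ((k : 𝕂) • N) ^ (d + 2) = 0 := by
      rw [_root_.smul_pow, pow_eq_zero_of_le (by omega) hd, smul_zero]
    have := h.pow k hij
    rw [← exp_nsmul, ← Nat.cast_smul_eq_nsmul 𝕂, exp_eq_sum_range_of_pow_eq_zero 𝕂 hk] at this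
    simp only [Matrix.sum_apply, _root_.smul_pow, smul_smul, Matrix.smul_apply, smul_eq_mul] at this
    rw [← this]
    exact sum_congr rfl fun l _ => by ring
  simpa using eq_zero_of_forall_sum_mul_natCast_pow_eq_zero hsum (l := 1) (by omega)

end Matrix

theorem lowerTri_of_exp_lowerTri_pos_general
    (n : ℕ) (B : Matrix (Fin n) (Fin n) ℝ) (μ : ℝ)
    (hchar : B.charpoly = (X - C μ) ^ n)
    (htri : LowerTriConstDiag (exp B)) :
    LowerTriConstDiag B := by
  have hN : IsNilpotent (B - algebraMap ℝ _ μ) :=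
    ⟨n, pow_sub_algebraMap_eq_zero_of_charpoly_eq hchar⟩
  have hexpN := IsLowerTriangular.exp_sub_algebraMap (fun i j hij => htri.1 i j hij) μ
  have hB : B.IsLowerTriangular := sub_add_cancel B (algebraMap ℝ _ μ) ▸
    (IsLowerTriangular.of_exp_of_isNilpotent hN hexpN).add (blockTriangular_algebraMap μ)
  exact ⟨fun i j hij => hB hij, fun i j => (hB.diag_eq_of_charpoly_eq hchar i).trans
    (hB.diag_eq_of_charpoly_eq hchar j).symm⟩

/-- Lemma 3.1(ii): if `B` is a real matrix with a unique eigenvalue `μ` and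
`exp B ∈ 𝕋_n⁺(ℝ)` (lower triangular with constant positive diagonal), then
`B ∈ 𝕋_n(ℝ)`. -/
theorem lowerTri_of_exp_lowerTri_pos
    (n : ℕ) (B : Matrix (Fin n) (Fin n) ℝ) (μ : ℝ)
    (hchar : B.charpoly = (X - C μ) ^ n)
    (htri : LowerTriConstDiag (exp B))
    (hpos : ∀ i, 0 < (exp B) i i) :
    LowerTriConstDiag B :=
  lowerTri_of_exp_lowerTri_pos_general n B μ hchar htri
end

section
/- Let A, B ∈ 𝔹_m(ℝ) (real 2m×2m block lower triangular matrices with blocks of the form [[α,β],[−β,α]] and constant diagonal block) with AB = BA and e^A = e^B. Then A = B + 2kπ J_m for some integer k, where J_m = diag(J_2,…,J_2) with J_2 = [[0,−1],[1,0]]. -/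
open NormedSpace

/-- Membership in `𝕊`: a real 2×2 matrix of the form `[[α, β], [-β, α]]`. -/
def MemS (b : Matrix (Fin 2) (Fin 2) ℝ) : Prop :=
  b 0 0 = b 1 1 ∧ b 1 0 = -(b 0 1)

/-- The `(i,j)` 2×2 block of a `2m × 2m` real matrix indexed by `Fin m × Fin 2`. -/
def blk {m : ℕ} (B : Matrix (Fin m × Fin 2) (Fin m × Fin 2) ℝ) (i j : Fin m) :
    Matrix (Fin 2) (Fin 2) ℝ :=
  Matrix.of fun a b => B (i, a) (j, b)

/-- Membership in `𝔹_m(ℝ)`: block lower triangular with 2×2 blocks in `𝕊` and all diagonal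
blocks equal. -/
def MemB {m : ℕ} (B : Matrix (Fin m × Fin 2) (Fin m × Fin 2) ℝ) : Prop :=
  (∀ i j : Fin m, MemS (blk B i j)) ∧
  (∀ i j : Fin m, i < j → blk B i j = 0) ∧
  (∀ i j : Fin m, blk B i i = blk B j j)

/-- `J_m = diag(J_2, …, J_2)` where `J_2 = [[0, -1], [1, 0]]`. -/
def Jmat (m : ℕ) : Matrix (Fin m × Fin 2) (Fin m × Fin 2) ℝ :=
  Matrix.of fun p q =>
    if p.1 = q.1 ∧ p.2 = 0 ∧ q.2 = 1 then (-1 : ℝ)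
    else if p.1 = q.1 ∧ p.2 = 1 ∧ q.2 = 0 then 1 else 0

/-!
Blocks `[[α, β], [-β, α]]` are the real matrices of multiplication by complex numbers, so
realification identifies `𝔹_m(ℝ)` with the lower triangular complex `m × m` matrices with constant
diagonal, and it is an injective continuous algebra map, hence commutes with `exp`. For such
commuting complex `A`, `B` write `A - B = c • 1 + D` with `D` strictly lower triangular, hence
nilpotent; then `exp (A - B) = exp A * exp (-B) = 1`, so `exp D` is the scalar `e^(-c)`. As the
scalar `exp D - 1` is nilpotent, `e^c = 1`, and `exp D = 1` forces the nilpotent `D` to vanish. Thus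
`A - B = 2kπi • 1`, whose realification is `2kπ • J_m`.
-/

theorem IsNilpotent.eq_zero_of_exp_eq_one {A : Type*} [Ring A] [Module ℚ A] {a : A}
    (ha : IsNilpotent a) (h : IsNilpotent.exp a = 1) : a = 0 := by
  obtain ⟨k, hk⟩ := ha
  set w : A := ∑ i ∈ Finset.range k, ((i + 2).factorial : ℚ)⁻¹ • a ^ i
  have hexp : IsNilpotent.exp a = 1 + a * (1 + a * w) := by
    rw [IsNilpotent.exp_eq_sum (pow_eq_zero_of_le (by omega : k ≤ k + 2) hk),
      Finset.sum_range_succ', Finset.sum_range_succ', mul_add, mul_one, ← mul_assoc, ← sq,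
      Finset.mul_sum]
    simp only [mul_smul_comm, ← pow_add, add_comm 2, zero_add, Nat.factorial_one,
      Nat.factorial_zero, Nat.cast_one, inv_one, pow_one, pow_zero, one_smul]
    abel
  have hcomm : Commute a w :=
    Commute.sum_right _ _ _ fun i _ => ((Commute.refl a).pow_right i).smul_right _
  have hunit : IsUnit (1 + a * w) := (hcomm.isNilpotent_mul_right ⟨k, hk⟩).isUnit_one_add
  rw [hexp, add_eq_left] at h
  exact hunit.mul_left_eq_zero.mp h

theorem NormedSpace.exp_eq_isNilpotent_exp {𝔸 : Type*} [Ring 𝔸] [Algebra ℚ 𝔸]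
    [TopologicalSpace 𝔸] [IsTopologicalRing 𝔸] {a : 𝔸} (ha : IsNilpotent a) :
    exp a = IsNilpotent.exp a := by
  obtain ⟨k, hk⟩ := ha
  rw [exp_eq_tsum_rat, IsNilpotent.exp_eq_sum hk]
  exact tsum_eq_sum fun i hi => by
    rw [pow_eq_zero_of_le (by simpa using hi) hk, smul_zero]

namespace Matrix

variable {n : Type*} [Fintype n] [DecidableEq n]

theorem isNilpotent_of_isLowerTriangular {R : Type*} [LinearOrder n] [CommRing R]
    {M : Matrix n n R} (hM : M.IsLowerTriangular) (hd : ∀ i, M i i = 0) : IsNilpotent M := by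
  have hchar : M.charpoly = Polynomial.X ^ Fintype.card n := by
    rw [← charpoly_transpose, charpoly_of_isUpperTriangular Mᵀ fun _ _ h => hM h]
    simp [hd]
  exact ⟨Fintype.card n, by simpa [hchar] using M.aeval_self_charpoly⟩

theorem exp_smul_one_add (c : ℂ) (D : Matrix n n ℂ) :
    exp (c • 1 + D) = Complex.exp c • exp D := by
  rw [exp_add_of_commute _ _ ((Commute.one_left D).smul_left c), smul_one_eq_diagonal,
    exp_diagonal, Pi.exp_def, ← Complex.exp_eq_exp_ℂ, ← smul_one_eq_diagonal, smul_one_mul]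

theorem exp_eq_one_and_eq_zero_of_exp_smul_one_add_eq_one [Nonempty n] {c : ℂ}
    {D : Matrix n n ℂ} (hD : IsNilpotent D) (h : exp (c • 1 + D) = 1) :
    Complex.exp c = 1 ∧ D = 0 := by
  have hexpD : exp D = scalar n (Complex.exp (-c)) := by
    rw [exp_smul_one_add] at h
    rw [scalar_apply, ← smul_one_eq_diagonal, ← h, smul_smul, ← Complex.exp_add,
      neg_add_cancel, Complex.exp_zero, one_smul]
  have hnil : IsNilpotent (scalar n (Complex.exp (-c) - 1)) := by
    rw [map_sub, ← hexpD, map_one, exp_eq_isNilpotent_exp hD]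
    exact hD.isNilpotent_exp_sub_one
  have hc : Complex.exp c = 1 := by
    rw [IsNilpotent.map_iff fun _ _ => scalar_inj.mp] at hnil
    rw [← inv_eq_one, ← Complex.exp_neg, ← sub_eq_zero]
    exact hnil.eq_zero
  refine ⟨hc, hD.eq_zero_of_exp_eq_one ?_⟩
  rw [← exp_eq_isNilpotent_exp hD, hexpD, Complex.exp_neg, hc, inv_one, map_one]

theorem exists_int_eq_add_of_exp_eq [LinearOrder n] {M N : Matrix n n ℂ}
    (hM : M.IsLowerTriangular) (hN : N.IsLowerTriangular)
    (hMd : ∀ i j, M i i = M j j) (hNd : ∀ i j, N i i = N j j)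
    (hc : Commute M N) (he : exp M = exp N) :
    ∃ k : ℤ, M = N + (2 * k * Real.pi * Complex.I) • 1 := by
  rcases isEmpty_or_nonempty n with _ | hn
  · exact ⟨0, Subsingleton.elim _ _⟩
  obtain ⟨i₀⟩ := id hn
  set c := M i₀ i₀ - N i₀ i₀
  set D := M - N - c • 1 with hD
  have hDtri : D.IsLowerTriangular := by
    rw [hD, smul_one_eq_diagonal]
    exact (hM.sub hN).sub (blockTriangular_diagonal _)
  have hDdiag : ∀ i, D i i = 0 := fun i => by
    simp [hD, c, hMd i i₀, hNd i i₀]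
  have hexp : exp (c • 1 + D) = 1 := by
    rw [hD, add_sub_cancel, sub_eq_add_neg, exp_add_of_commute _ _ hc.neg_right, he,
      ← exp_add_of_commute _ _ (Commute.refl N).neg_right, add_neg_cancel, exp_zero]
  obtain ⟨hc1, hD0⟩ := exp_eq_one_and_eq_zero_of_exp_smul_one_add_eq_one
    (isNilpotent_of_isLowerTriangular hDtri hDdiag) hexp
  obtain ⟨k, hk⟩ := Complex.exp_eq_one_iff.mp hc1
  refine ⟨k, ?_⟩
  rw [← sub_eq_iff_eq_add', sub_eq_zero.mp hD0, hk]
  congr 1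
  ring

end Matrix

/-- Entrywise, `z` becomes the block `[[re z, -im z], [im z, re z]]`
(`Algebra.leftMulMatrix_complex`). -/
noncomputable def realify (n : Type*) [Fintype n] [DecidableEq n] :
    Matrix n n ℂ →ₐ[ℝ] Matrix (n × Fin 2) (n × Fin 2) ℝ :=
  (Matrix.compAlgEquiv n (Fin 2) ℝ ℝ).toAlgHom.comp
    (Algebra.leftMulMatrix Complex.basisOneI).mapMatrix

section Realify

variable {n : Type*} [Fintype n] [DecidableEq n]

theorem realify_apply (M : Matrix n n ℂ) (p q : n × Fin 2) :
    realify n M p q = Algebra.leftMulMatrix Complex.basisOneI (M p.1 q.1) p.2 q.2 := rfl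

theorem realify_injective : Function.Injective (realify n) := fun M N h =>
  Matrix.ext fun i j => Algebra.leftMulMatrix_injective Complex.basisOneI <|
    Matrix.ext fun a b => by simpa only [realify_apply] using congrFun (congrFun h (i, a)) (j, b)

theorem realify_exp (M : Matrix n n ℂ) : realify n (exp M) = exp (realify n M) :=
  open scoped Matrix.Norms.Operator in
  map_exp (realify n) (LinearMap.continuous_of_finiteDimensional (realify n).toLinearMap) M

end Realify

theorem realify_I_smul_one (m : ℕ) : realify (Fin m) (Complex.I • 1) = Jmat m := by
  ext ⟨i, a⟩ ⟨j, b⟩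
  by_cases hij : i = j
  · subst hij
    fin_cases a <;> fin_cases b <;> simp [realify_apply, Jmat, Algebra.leftMulMatrix_complex]
  · fin_cases a <;> fin_cases b <;> simp [realify_apply, Jmat, Algebra.leftMulMatrix_complex, hij]

theorem blk_realify {m : ℕ} (M : Matrix (Fin m) (Fin m) ℂ) (i j : Fin m) :
    blk (realify (Fin m) M) i j = Algebra.leftMulMatrix Complex.basisOneI (M i j) := rfl

theorem memS_iff_mem_range_leftMulMatrix (b : Matrix (Fin 2) (Fin 2) ℝ) :
    MemS b ↔ b ∈ Set.range (Algebra.leftMulMatrix Complex.basisOneI) := by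
  constructor
  · rintro ⟨h0, h1⟩
    refine ⟨⟨b 0 0, b 1 0⟩, ?_⟩
    ext a c
    fin_cases a <;> fin_cases c <;> simp [Algebra.leftMulMatrix_complex, h0, h1]
  · rintro ⟨z, rfl⟩
    simp [MemS, Algebra.leftMulMatrix_complex]

theorem exists_realify_eq {m : ℕ} {A : Matrix (Fin m × Fin 2) (Fin m × Fin 2) ℝ}
    (hA : ∀ i j, MemS (blk A i j)) : ∃ M, realify (Fin m) M = A := by
  choose M hM using fun i j => (memS_iff_mem_range_leftMulMatrix _).mp (hA i j)
  exact ⟨M, Matrix.ext fun p q => congrFun (congrFun (hM p.1 q.1) p.2) q.2⟩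

theorem memB_realify_iff {m : ℕ} {M : Matrix (Fin m) (Fin m) ℂ} :
    MemB (realify (Fin m) M) ↔ M.IsLowerTriangular ∧ ∀ i j, M i i = M j j := by
  simp only [MemB, blk_realify, memS_iff_mem_range_leftMulMatrix, Set.mem_range_self,
    implies_true, true_and, map_eq_zero_iff _ (Algebra.leftMulMatrix_injective _),
    (Algebra.leftMulMatrix_injective _).eq_iff]
  rfl

/-- Proposition 3.6(ii): if `A, B ∈ 𝔹_m(ℝ)` commute and `exp A = exp B`,
then `A = B + 2kπ J_m` for some integer `k`. -/
theorem eq_add_int_smul_J_of_exp_eq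
    (m : ℕ) (A B : Matrix (Fin m × Fin 2) (Fin m × Fin 2) ℝ)
    (hA : MemB A) (hB : MemB B)
    (hc : A * B = B * A) (he : exp A = exp B) :
    ∃ k : ℤ, A = B + ((2 * (k : ℝ) * Real.pi) • Jmat m) := by
  obtain ⟨M, rfl⟩ := exists_realify_eq hA.1
  obtain ⟨N, rfl⟩ := exists_realify_eq hB.1
  obtain ⟨hMt, hMd⟩ := memB_realify_iff.mp hA
  obtain ⟨hNt, hNd⟩ := memB_realify_iff.mp hB
  obtain ⟨k, rfl⟩ := Matrix.exists_int_eq_add_of_exp_eq hMt hNt hMd hNd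
    (realify_injective (by simpa only [map_mul] using hc))
    (realify_injective (by rw [realify_exp, realify_exp, he]))
  refine ⟨k, ?_⟩
  rw [map_add, ← realify_I_smul_one, ← map_smul, ← smul_assoc, Complex.real_smul]
  norm_num
end
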